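/- Let (M, ∇₀) be a hom-connection with respect to (Ω¹A, d_A). For f ∈ Hom_A(Ω¹B, M) and b ∈ B, the map ω ↦ f(b·θ₁(ω)) belongs to Hom_A(Ω¹A, M), so ∇₀^θ(f)(b) := ∇₀(ω ↦ f(b·θ₁(ω))) − f(d_B b) is defined. Then: (i) ∇₀^θ(f) is right A-linear, i.e. ∇₀^θ(f)(b·θ₀(a)) = ∇₀^θ(f)(b)·a; (ii) ∇₀^θ is a hom-connection on the right B-module Hom_A(B, M) with respect to (Ω¹B, d_B); explicitly, for all b, b′ ∈ B: ∇₀^θ(f∘ℓ_{b′})(b) = ∇₀^θ(f)(b′b) + f((d_B b′)·b), where ℓ_{b′} : Ω¹B → Ω¹B is left multiplication by b′. -/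

import Mathlib

set_option linter.unusedSectionVars false

/-!
STATEMENT 10: Let `θ = (θ₀, θ₁) : (Ω¹A, d_A) → (Ω¹B, d_B)` be a morphism of first-order
differential calculi and `(M, ∇₀)` a hom-connection over `A`.  For
`f ∈ Hom_A(Ω¹B, M)` and `b ∈ B`, `ω ↦ f(b·θ₁(ω))` lies in `Hom_A(Ω¹A, M)`, so
`∇₀^θ(f)(b) := ∇₀(ω ↦ f(b·θ₁(ω))) − f(d_B b)` is defined.  Then
(i) `∇₀^θ(f)` is right `A`-linear: `∇₀^θ(f)(b·θ₀(a)) = ∇₀^θ(f)(b)·a`, and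
(ii) `∇₀^θ` is a hom-connection on `Hom_A(B, M)`:
`∇₀^θ(f∘ℓ_{b′})(b) = ∇₀^θ(f)(b′b) + f((d_B b′)·b)`.
-/

open MulOpposite

noncomputable section

variable {k A B ΩA ΩB M : Type*} [Field k] [Ring A] [Algebra k A] [Ring B] [Algebra k B]
  [AddCommGroup ΩA] [Module k ΩA] [Module A ΩA] [Module Aᵐᵒᵖ ΩA]
  [SMulCommClass A Aᵐᵒᵖ ΩA]
  [AddCommGroup ΩB] [Module k ΩB] [Module B ΩB] [Module Bᵐᵒᵖ ΩB]
  [SMulCommClass B Bᵐᵒᵖ ΩB] [SMulCommClass B k ΩB]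
  [AddCommGroup M] [Module k M] [Module Aᵐᵒᵖ M] [SMulCommClass Aᵐᵒᵖ k M]

/-- A first-order differential calculus. -/
def IsFODC {R Ω₁ : Type*} [Ring R] [Algebra k R] [AddCommGroup Ω₁] [Module k Ω₁]
    [Module R Ω₁] [Module Rᵐᵒᵖ Ω₁] (d : R →ₗ[k] Ω₁) : Prop :=
  ∀ a b : R, d (a * b) = a • d b + op b • d a

/-- The right `A`-action on `Hom_A(Ω¹A, M)`: `(f · a) ω := f (a • ω)`. -/
def rsmulHom (a : A) (f : ΩA →ₗ[Aᵐᵒᵖ] M) : ΩA →ₗ[Aᵐᵒᵖ] M where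
  toFun ω := f (a • ω)
  map_add' x y := by simp [smul_add]
  map_smul' b ω := by
    haveI := SMulCommClass.symm A Aᵐᵒᵖ ΩA
    show f (a • b • ω) = b • f (a • ω)
    rw [smul_comm a b ω, map_smul]

/-- A hom-connection over `(A, Ω¹A)`. -/
def IsHomConnection (d : A →ₗ[k] ΩA) (D : (ΩA →ₗ[Aᵐᵒᵖ] M) → M) : Prop :=
  IsLinearMap k D ∧
    ∀ (f : ΩA →ₗ[Aᵐᵒᵖ] M) (a : A), D (rsmulHom a f) = op a • D f + f (d a)

/-- For `f ∈ Hom_A(Ω¹B, M)` and `b ∈ B`, the right `A`-linear map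
`ω ↦ f(b·θ₁(ω)) : Ω¹A → M`. -/
def pull (θ₀ : A →ₐ[k] B) (θ₁ : ΩA →ₗ[k] ΩB)
    (hθr : ∀ (a : A) (ω : ΩA), θ₁ (op a • ω) = op (θ₀ a) • θ₁ ω)
    (f : ΩB →ₗ[k] M)
    (hf : ∀ (a : A) (ω : ΩB), f (op (θ₀ a) • ω) = op a • f ω)
    (b : B) : ΩA →ₗ[Aᵐᵒᵖ] M where
  toFun ω := f (b • θ₁ ω)
  map_add' x y := by simp [smul_add]
  map_smul' a ω := by
    haveI := SMulCommClass.symm B Bᵐᵒᵖ ΩB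
    show f (b • θ₁ (op a.unop • ω)) = a • f (b • θ₁ ω)
    rw [hθr, smul_comm, hf, op_unop]

/-- Left multiplication `ℓ_{b′}` on `Ω¹B` as a `k`-linear map. -/
def lmulForm (b' : B) : ΩB →ₗ[k] ΩB := DistribMulAction.toLinearMap k ΩB b'

theorem pull_apply (θ₀ : A →ₐ[k] B) (θ₁ : ΩA →ₗ[k] ΩB)
    (hθr : ∀ (a : A) (ω : ΩA), θ₁ (op a • ω) = op (θ₀ a) • θ₁ ω)
    (f : ΩB →ₗ[k] M) (hf : ∀ (a : A) (ω : ΩB), f (op (θ₀ a) • ω) = op a • f ω)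
    (b : B) (ω : ΩA) :
    pull θ₀ θ₁ hθr f hf b ω = f (b • θ₁ ω) :=
  rfl

theorem pull_mul_map (θ₀ : A →ₐ[k] B) (θ₁ : ΩA →ₗ[k] ΩB)
    (hθl : ∀ (a : A) (ω : ΩA), θ₁ (a • ω) = θ₀ a • θ₁ ω)
    (hθr : ∀ (a : A) (ω : ΩA), θ₁ (op a • ω) = op (θ₀ a) • θ₁ ω)
    (f : ΩB →ₗ[k] M) (hf : ∀ (a : A) (ω : ΩB), f (op (θ₀ a) • ω) = op a • f ω)
    (b : B) (a : A) :
    pull θ₀ θ₁ hθr f hf (b * θ₀ a) = rsmulHom a (pull θ₀ θ₁ hθr f hf b) := by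
  ext ω
  change f ((b * θ₀ a) • θ₁ ω) = f (b • θ₁ (a • ω))
  rw [hθl, mul_smul]

theorem pull_comp_lmulForm (θ₀ : A →ₐ[k] B) (θ₁ : ΩA →ₗ[k] ΩB)
    (hθr : ∀ (a : A) (ω : ΩA), θ₁ (op a • ω) = op (θ₀ a) • θ₁ ω)
    (f : ΩB →ₗ[k] M) (hf : ∀ (a : A) (ω : ΩB), f (op (θ₀ a) • ω) = op a • f ω)
    (b' : B) (hf' : ∀ (a : A) (ω : ΩB),
      (f ∘ₗ lmulForm (k := k) b') (op (θ₀ a) • ω) = op a • (f ∘ₗ lmulForm (k := k) b') ω)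
    (b : B) :
    pull θ₀ θ₁ hθr (f ∘ₗ lmulForm (k := k) b') hf' b = pull θ₀ θ₁ hθr f hf (b' * b) := by
  ext ω
  exact congrArg f (mul_smul b' b (θ₁ ω)).symm

theorem induced_homConnection_along_dga_map_general
    (dA : A →ₗ[k] ΩA)
    (dB : B →ₗ[k] ΩB) (hdB : IsFODC (k := k) dB)
    (θ₀ : A →ₐ[k] B) (θ₁ : ΩA →ₗ[k] ΩB)
    (hθl : ∀ (a : A) (ω : ΩA), θ₁ (a • ω) = θ₀ a • θ₁ ω)
    (hθr : ∀ (a : A) (ω : ΩA), θ₁ (op a • ω) = op (θ₀ a) • θ₁ ω)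
    (hθd : ∀ a : A, θ₁ (dA a) = dB (θ₀ a))
    (D : (ΩA →ₗ[Aᵐᵒᵖ] M) → M) (hD : IsHomConnection dA D)
    (f : ΩB →ₗ[k] M)
    (hf : ∀ (a : A) (ω : ΩB), f (op (θ₀ a) • ω) = op a • f ω) :
    (∀ (b : B) (a : A),
        D (pull θ₀ θ₁ hθr f hf (b * θ₀ a)) - f (dB (b * θ₀ a)) =
          op a • (D (pull θ₀ θ₁ hθr f hf b) - f (dB b))) ∧
    (∀ (b b' : B)
        (hf' : ∀ (a : A) (ω : ΩB),
          (f ∘ₗ lmulForm (k := k) b') (op (θ₀ a) • ω) =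
            op a • (f ∘ₗ lmulForm (k := k) b') ω),
        D (pull θ₀ θ₁ hθr (f ∘ₗ lmulForm (k := k) b') hf' b) -
            (f ∘ₗ lmulForm (k := k) b') (dB b) =
          (D (pull θ₀ θ₁ hθr f hf (b' * b)) - f (dB (b' * b))) + f (op b • dB b')) := by
  refine ⟨fun b a => ?_, fun b b' hf' => ?_⟩
  · -- Both Leibniz rules, of `∇₀` and of `d_B`, produce the same term `f (b • d_B (θ₀ a))`.
    have hD_pull : D (pull θ₀ θ₁ hθr f hf (b * θ₀ a)) =
        op a • D (pull θ₀ θ₁ hθr f hf b) + f (b • dB (θ₀ a)) := by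
      rw [pull_mul_map θ₀ θ₁ hθl, hD.2, pull_apply, hθd]
    have hf_dB : f (dB (b * θ₀ a)) = f (b • dB (θ₀ a)) + op a • f (dB b) := by
      rw [hdB, map_add, hf]
    rw [hD_pull, hf_dB, smul_sub]
    abel
  · have hf_dB : f (dB (b' * b)) = f (b' • dB b) + f (op b • dB b') := by
      rw [hdB, map_add]
    rw [pull_comp_lmulForm θ₀ θ₁ hθr f hf, hf_dB]
    change _ - f (b' • dB b) = _
    abel

/-- The induced map
`∇₀^θ(f)(b) = ∇₀(ω ↦ f(b·θ₁ω)) − f(d_B b)` (i) is right `A`-linear in `b`, and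
(ii) satisfies the hom-connection (Leibniz) rule on the right `B`-module
`Hom_A(B, M)`: `∇₀^θ(f∘ℓ_{b′})(b) = ∇₀^θ(f)(b′b) + f((d_B b′)·b)`. -/
theorem induced_homConnection_along_dga_map
    (dA : A →ₗ[k] ΩA) (hdA : IsFODC (k := k) dA)
    (dB : B →ₗ[k] ΩB) (hdB : IsFODC (k := k) dB)
    (θ₀ : A →ₐ[k] B) (θ₁ : ΩA →ₗ[k] ΩB)
    (hθl : ∀ (a : A) (ω : ΩA), θ₁ (a • ω) = θ₀ a • θ₁ ω)
    (hθr : ∀ (a : A) (ω : ΩA), θ₁ (op a • ω) = op (θ₀ a) • θ₁ ω)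
    (hθd : ∀ a : A, θ₁ (dA a) = dB (θ₀ a))
    (D : (ΩA →ₗ[Aᵐᵒᵖ] M) → M) (hD : IsHomConnection dA D)
    (f : ΩB →ₗ[k] M)
    (hf : ∀ (a : A) (ω : ΩB), f (op (θ₀ a) • ω) = op a • f ω) :
    (∀ (b : B) (a : A),
        D (pull θ₀ θ₁ hθr f hf (b * θ₀ a)) - f (dB (b * θ₀ a)) =
          op a • (D (pull θ₀ θ₁ hθr f hf b) - f (dB b))) ∧
    (∀ (b b' : B)
        (hf' : ∀ (a : A) (ω : ΩB),
          (f ∘ₗ lmulForm (k := k) b') (op (θ₀ a) • ω) =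
            op a • (f ∘ₗ lmulForm (k := k) b') ω),
        D (pull θ₀ θ₁ hθr (f ∘ₗ lmulForm (k := k) b') hf' b) -
            (f ∘ₗ lmulForm (k := k) b') (dB b) =
          (D (pull θ₀ θ₁ hθr f hf (b' * b)) - f (dB (b' * b))) + f (op b • dB b')) :=
  induced_homConnection_along_dga_map_general dA dB hdB θ₀ θ₁ hθl hθr hθd D hD f hf

end
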